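/- For every natural number n there exists a set S of n points in ℝ², each with rational coordinates and lying on the unit circle, such that no point of the open unit disc lies on three pairwise distinct closed segments each of which joins two distinct points of S. (In particular, since the points lie on a circle, S is in convex position and no three points of S are collinear.) -/

import Mathlib

/-- A point of the plane is rational if both of its coordinates are rational. -/
def IsRatPt (p : EuclideanSpace ℝ (Fin 2)) : Prop :=
  (∃ q : ℚ, p 0 = (q : ℝ)) ∧ (∃ q : ℚ, p 1 = (q : ℝ))

/-!
A line meets a sphere in at most two points, so two distinct chords of a sphere meet in at most
one point. Hence a finite set `S` on the sphere has only finitely many crossing points of its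
chords, and only finitely many points `p` of the sphere have a chord `[p, q]`, `q ∈ S`, through
one of those crossing points inside the ball. Adding to `S` any other point `p` keeps the property
that no three chords are concurrent inside the ball: two chords from `p` meet only at `p`, and a
chord from `p` avoids the crossing points of `S`. The unit circle has infinitely many rational
points (inverse stereographic projection of `ℚ`), so such points can be added one at a time.
-/

open Set Metric

section Chords

variable {V : Type*} [AddCommGroup V] [Module ℝ V]

theorem left_mem_affineSpan_pair_of_mem_segment {a b x y : V} (hxy : x ≠ y)
    (hx : x ∈ segment ℝ a b) (hy : y ∈ segment ℝ a b) : a ∈ line[ℝ, x, y] := by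
  have hsub : segment ℝ a b ⊆ line[ℝ, a, b] :=
    (affineSpan ℝ {a, b}).convex.segment_subset (left_mem_affineSpan_pair ℝ a b)
      (right_mem_affineSpan_pair ℝ a b)
  have hcol := collinear_insert_insert_of_mem_affineSpan_pair (hsub hx) (hsub hy)
  exact hcol.mem_affineSpan_of_mem_of_ne (by simp) (by simp) (by simp) hxy

def chords (S : Set V) : Set (Set V) :=
  {C | ∃ a ∈ S, ∃ b ∈ S, a ≠ b ∧ segment ℝ a b = C}

theorem chords_mono : Monotone (chords (V := V)) := by
  rintro S T hST _ ⟨a, ha, b, hb, hab, rfl⟩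
  exact ⟨a, hST ha, b, hST hb, hab, rfl⟩

theorem Set.Finite.chords {S : Set V} (hS : S.Finite) : (chords S).Finite :=
  (hS.image2 (segment ℝ) hS).subset <| by
    rintro _ ⟨a, ha, b, hb, -, rfl⟩
    exact mem_image2_of_mem ha hb

theorem chords_insert_subset (p : V) (S : Set V) :
    chords (insert p S) ⊆ chords S ∪ {C | ∃ q ∈ S, segment ℝ p q = C} := by
  rintro _ ⟨a, ha, b, hb, hab, rfl⟩
  rcases ha with rfl | ha <;> rcases hb with rfl | hb
  · exact absurd rfl hab
  · exact Or.inr ⟨b, hb, rfl⟩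
  · exact Or.inr ⟨a, ha, segment_symm ℝ b a⟩
  · exact Or.inl ⟨a, ha, b, hb, hab, rfl⟩

def chordCrossings (S : Set V) : Set V :=
  {x | ∃ C₁ ∈ chords S, ∃ C₂ ∈ chords S, C₁ ≠ C₂ ∧ x ∈ C₁ ∧ x ∈ C₂}

def NoThreeChordsConcurrent (S U : Set V) : Prop :=
  ∀ x ∈ U, ∀ C₁ ∈ chords S, ∀ C₂ ∈ chords S, ∀ C₃ ∈ chords S,
    C₁ ≠ C₂ → C₁ ≠ C₃ → C₂ ≠ C₃ → x ∈ C₁ → x ∈ C₂ → x ∈ C₃ → False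

end Chords

section Sphere

variable {E : Type*} [NormedAddCommGroup E] [InnerProductSpace ℝ E] {c : E} {r : ℝ}

theorem eq_or_eq_of_collinear_of_mem_sphere {a b z : E} (ha : a ∈ sphere c r)
    (hb : b ∈ sphere c r) (hz : z ∈ sphere c r) (hcol : Collinear ℝ ({a, b, z} : Set E))
    (hab : a ≠ b) : z = a ∨ z = b := by
  by_contra! h
  have hcos : EuclideanGeometry.Cospherical ({a, b, z} : Set E) := by
    refine ⟨c, r, ?_⟩
    simp only [mem_insert_iff, mem_singleton_iff, forall_eq_or_imp, forall_eq]
    exact ⟨ha, hb, hz⟩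
  exact affineIndependent_iff_not_collinear_set.1
    (hcos.affineIndependent_of_ne hab (Ne.symm h.1) (Ne.symm h.2)) hcol

theorem subsingleton_inter_of_mem_chords_sphere {C₁ C₂ : Set E}
    (h₁ : C₁ ∈ chords (sphere c r)) (h₂ : C₂ ∈ chords (sphere c r)) (hne : C₁ ≠ C₂) :
    (C₁ ∩ C₂).Subsingleton := by
  obtain ⟨a, ha, b, hb, hab, rfl⟩ := h₁
  obtain ⟨a', ha', b', hb', hab', rfl⟩ := h₂
  rintro x ⟨hx, hx'⟩ y ⟨hy, hy'⟩
  by_contra hxy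
  have on_line : ∀ u v : E, x ∈ segment ℝ u v → y ∈ segment ℝ u v →
      u ∈ line[ℝ, x, y] ∧ v ∈ line[ℝ, x, y] := fun u v hx hy =>
    ⟨left_mem_affineSpan_pair_of_mem_segment hxy hx hy,
      left_mem_affineSpan_pair_of_mem_segment hxy (segment_symm ℝ u v ▸ hx)
        (segment_symm ℝ u v ▸ hy)⟩
  obtain ⟨la, lb⟩ := on_line a b hx hy
  obtain ⟨la', lb'⟩ := on_line a' b' hx' hy'
  have endpoint : ∀ z ∈ sphere c r, z ∈ line[ℝ, x, y] → z = a ∨ z = b := fun z hz hzl =>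
    eq_or_eq_of_collinear_of_mem_sphere ha hb hz
      (collinear_triple_of_mem_affineSpan_pair la lb hzl) hab
  rcases endpoint a' ha' la' with rfl | rfl <;> rcases endpoint b' hb' lb' with rfl | rfl
  · exact hab' rfl
  · exact hne rfl
  · exact hne (segment_symm ℝ _ _)
  · exact hab' rfl

theorem Set.Finite.chordCrossings {S : Set E} (hS : S.Finite) (hSs : S ⊆ sphere c r) :
    (chordCrossings S).Finite := by
  have hfin := hS.chords
  refine (hfin.biUnion fun C₁ h₁ => (hfin.sdiff (t := {C₁})).biUnion fun C₂ h₂ =>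
    (subsingleton_inter_of_mem_chords_sphere (chords_mono hSs h₁) (chords_mono hSs h₂.1)
      (Ne.symm h₂.2)).finite).subset ?_
  rintro x ⟨C₁, h₁, C₂, h₂, hne, hx₁, hx₂⟩
  exact mem_biUnion h₁ (mem_biUnion ⟨h₂, hne.symm⟩ ⟨hx₁, hx₂⟩)

theorem eq_of_mem_segment_of_mem_sphere {p₁ p₂ q x : E} (hp₁ : p₁ ∈ sphere c r)
    (hp₂ : p₂ ∈ sphere c r) (hq : q ∈ sphere c r) (hp₁q : p₁ ≠ q) (hp₂q : p₂ ≠ q) (hxq : x ≠ q)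
    (hx₁ : x ∈ segment ℝ p₁ q) (hx₂ : x ∈ segment ℝ p₂ q) : p₁ = p₂ := by
  have l₁ := left_mem_affineSpan_pair_of_mem_segment hxq hx₁ (right_mem_segment ℝ p₁ q)
  have l₂ := left_mem_affineSpan_pair_of_mem_segment hxq hx₂ (right_mem_segment ℝ p₂ q)
  have hcol := collinear_triple_of_mem_affineSpan_pair l₁ (right_mem_affineSpan_pair ℝ x q) l₂
  exact ((eq_or_eq_of_collinear_of_mem_sphere hp₁ hq hp₂ hcol hp₁q).resolve_right hp₂q).symm

theorem finite_setOf_mem_sphere_mem_segment {q x : E} (hq : q ∈ sphere c r) (hxq : x ≠ q) :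
    {p ∈ sphere c r | x ∈ segment ℝ p q}.Finite := by
  have hsub : {p ∈ sphere c r | p ≠ q ∧ x ∈ segment ℝ p q}.Subsingleton :=
    fun p₁ h₁ p₂ h₂ => eq_of_mem_segment_of_mem_sphere h₁.1 h₂.1 hq h₁.2.1 h₂.2.1 hxq h₁.2.2 h₂.2.2
  refine (hsub.finite.insert q).subset fun p hp => ?_
  by_cases hpq : p = q
  · exact Or.inl hpq
  · exact Or.inr ⟨hp.1, hpq, hp.2⟩

theorem NoThreeChordsConcurrent.insert {S : Set E} {p : E} (hSs : S ⊆ sphere c r)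
    (hS : NoThreeChordsConcurrent S (ball c r)) (hp : p ∈ sphere c r) (hpS : p ∉ S)
    (hpx : ∀ x ∈ chordCrossings S ∩ ball c r, ∀ q ∈ S, x ∉ segment ℝ p q) :
    NoThreeChordsConcurrent (insert p S) (ball c r) := by
  intro x hx C₁ h₁ C₂ h₂ C₃ h₃ h₁₂ h₁₃ h₂₃ hx₁ hx₂ hx₃
  have two_from_p : ∀ {C C'}, (∃ q ∈ S, segment ℝ p q = C) → (∃ q ∈ S, segment ℝ p q = C') →
      C ≠ C' → x ∈ C → x ∈ C' → False := by
    rintro _ _ ⟨q, hq, rfl⟩ ⟨q', hq', rfl⟩ hne hxq hxq'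
    have chord : ∀ {q}, q ∈ S → segment ℝ p q ∈ chords (sphere c r) := fun hq =>
      ⟨p, hp, _, hSs hq, fun h => hpS (h ▸ hq), rfl⟩
    exact sphere_disjoint_ball.symm.ne_of_mem hx hp <|
      subsingleton_inter_of_mem_chords_sphere (chord hq) (chord hq') hne ⟨hxq, hxq'⟩
        ⟨left_mem_segment ℝ p q, left_mem_segment ℝ p q'⟩
  have one_from_p : ∀ {C C' C''}, (∃ q ∈ S, segment ℝ p q = C) → C' ∈ chords S →
      C'' ∈ chords S → C' ≠ C'' → x ∈ C → x ∈ C' → x ∈ C'' → False := by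
    rintro _ C' C'' ⟨q, hq, rfl⟩ h' h'' hne hxq hx' hx''
    exact hpx x ⟨⟨C', h', C'', h'', hne, hx', hx''⟩, hx⟩ q hq hxq
  rcases chords_insert_subset p S h₁ with h₁ | h₁ <;>
    rcases chords_insert_subset p S h₂ with h₂ | h₂ <;>
    rcases chords_insert_subset p S h₃ with h₃ | h₃
  · exact hS x hx C₁ h₁ C₂ h₂ C₃ h₃ h₁₂ h₁₃ h₂₃ hx₁ hx₂ hx₃
  · exact one_from_p h₃ h₁ h₂ h₁₂ hx₃ hx₁ hx₂
  · exact one_from_p h₂ h₁ h₃ h₁₃ hx₂ hx₁ hx₃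
  · exact two_from_p h₂ h₃ h₂₃ hx₂ hx₃
  · exact one_from_p h₁ h₂ h₃ h₂₃ hx₁ hx₂ hx₃
  · exact two_from_p h₁ h₃ h₁₃ hx₁ hx₃
  · exact two_from_p h₁ h₂ h₁₂ hx₁ hx₂
  · exact two_from_p h₁ h₂ h₁₂ hx₁ hx₂

theorem exists_insert_noThreeChordsConcurrent {S T : Set E} (hT : T.Infinite)
    (hTs : T ⊆ sphere c r) (hS : S.Finite) (hSs : S ⊆ sphere c r)
    (h : NoThreeChordsConcurrent S (ball c r)) :
    ∃ p ∈ T, p ∉ S ∧ NoThreeChordsConcurrent (insert p S) (ball c r) := by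
  have hbad : (⋃ x ∈ chordCrossings S ∩ ball c r, ⋃ q ∈ S,
      {p ∈ sphere c r | x ∈ segment ℝ p q}).Finite :=
    ((hS.chordCrossings hSs).inter_of_left _).biUnion fun x hx => hS.biUnion fun q hq =>
      finite_setOf_mem_sphere_mem_segment (hSs hq)
        (sphere_disjoint_ball.symm.ne_of_mem hx.2 (hSs hq))
  obtain ⟨p, hpT, hp⟩ := hT.exists_notMem_finite (hS.union hbad)
  rw [mem_union, not_or] at hp
  refine ⟨p, hpT, hp.1, h.insert hSs (hTs hpT) hp.1 fun x hx q hq hpq => hp.2 ?_⟩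
  exact mem_biUnion hx (mem_biUnion hq ⟨hTs hpT, hpq⟩)

theorem exists_finset_card_eq_noThreeChordsConcurrent {T : Set E} (hT : T.Infinite)
    (hTs : T ⊆ sphere c r) (n : ℕ) :
    ∃ S : Finset E, ↑S ⊆ T ∧ S.card = n ∧ NoThreeChordsConcurrent (S : Set E) (ball c r) := by
  classical
  induction n with
  | zero => exact ⟨∅, by simp, rfl, by simp [NoThreeChordsConcurrent, chords]⟩
  | succ n ih =>
    obtain ⟨S, hST, rfl, hS⟩ := ih
    obtain ⟨p, hpT, hpS, hpS'⟩ :=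
      exists_insert_noThreeChordsConcurrent hT hTs S.finite_toSet (hST.trans hTs) hS
    refine ⟨insert p S, ?_, Finset.card_insert_of_notMem hpS, by rwa [Finset.coe_insert]⟩
    rw [Finset.coe_insert]
    exact insert_subset hpT hST

end Sphere

-- Inverse stereographic projection from `(-1, 0)`.
noncomputable def unitCircleRatPt (t : ℚ) : EuclideanSpace ℝ (Fin 2) :=
  !₂[(1 - (t : ℝ) ^ 2) / (1 + (t : ℝ) ^ 2), 2 * t / (1 + (t : ℝ) ^ 2)]

theorem unitCircleRatPt_apply_zero (t : ℚ) :
    unitCircleRatPt t 0 = (1 - (t : ℝ) ^ 2) / (1 + (t : ℝ) ^ 2) := rfl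

theorem unitCircleRatPt_apply_one (t : ℚ) :
    unitCircleRatPt t 1 = 2 * t / (1 + (t : ℝ) ^ 2) := rfl

theorem isRatPt_unitCircleRatPt (t : ℚ) : IsRatPt (unitCircleRatPt t) :=
  ⟨⟨(1 - t ^ 2) / (1 + t ^ 2), by simp [unitCircleRatPt_apply_zero]⟩,
    ⟨2 * t / (1 + t ^ 2), by simp [unitCircleRatPt_apply_one]⟩⟩

theorem norm_unitCircleRatPt (t : ℚ) : ‖unitCircleRatPt t‖ = 1 := by
  have ht : (1 : ℝ) + (t : ℝ) ^ 2 ≠ 0 := by positivity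
  rw [EuclideanSpace.norm_eq, Fin.sum_univ_two, Real.sqrt_eq_one]
  simp only [unitCircleRatPt_apply_zero, unitCircleRatPt_apply_one, Real.norm_eq_abs, sq_abs]
  field_simp
  ring

theorem unitCircleRatPt_injective : Function.Injective unitCircleRatPt := by
  have hinv : ∀ t, unitCircleRatPt t 1 / (1 + unitCircleRatPt t 0) = t := fun t => by
    have ht : (1 : ℝ) + (t : ℝ) ^ 2 ≠ 0 := by positivity
    rw [unitCircleRatPt_apply_zero, unitCircleRatPt_apply_one]
    field_simp
    ring
  intro t t' h
  have hcast : (t : ℝ) = t' := (hinv t).symm.trans (h ▸ hinv t')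
  exact_mod_cast hcast

theorem infinite_setOf_isRatPt_norm_eq_one :
    {p : EuclideanSpace ℝ (Fin 2) | IsRatPt p ∧ ‖p‖ = 1}.Infinite :=
  infinite_of_injective_forall_mem unitCircleRatPt_injective fun t =>
    ⟨isRatPt_unitCircleRatPt t, norm_unitCircleRatPt t⟩

/-- For every `n` there are `n` rational points on the unit circle such that no
three pairwise distinct chords are concurrent at a point of the open unit disc. -/
theorem exists_rational_points_no_three_concurrent_chords (n : ℕ) :
    ∃ S : Finset (EuclideanSpace ℝ (Fin 2)),
      S.card = n ∧
      (∀ p ∈ S, IsRatPt p ∧ ‖p‖ = 1) ∧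
      ∀ x : EuclideanSpace ℝ (Fin 2), ‖x‖ < 1 →
        ¬ ∃ p₁ q₁ p₂ q₂ p₃ q₃ : EuclideanSpace ℝ (Fin 2),
            p₁ ∈ S ∧ q₁ ∈ S ∧ p₂ ∈ S ∧ q₂ ∈ S ∧ p₃ ∈ S ∧ q₃ ∈ S ∧
            p₁ ≠ q₁ ∧ p₂ ≠ q₂ ∧ p₃ ≠ q₃ ∧
            segment ℝ p₁ q₁ ≠ segment ℝ p₂ q₂ ∧
            segment ℝ p₁ q₁ ≠ segment ℝ p₃ q₃ ∧
            segment ℝ p₂ q₂ ≠ segment ℝ p₃ q₃ ∧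
            x ∈ segment ℝ p₁ q₁ ∧ x ∈ segment ℝ p₂ q₂ ∧ x ∈ segment ℝ p₃ q₃ := by
  obtain ⟨S, hST, rfl, hS⟩ := exists_finset_card_eq_noThreeChordsConcurrent
    infinite_setOf_isRatPt_norm_eq_one (fun p hp => mem_sphere_zero_iff_norm.2 hp.2) n
  refine ⟨S, rfl, fun p hp => hST hp, ?_⟩
  rintro x hx ⟨p₁, q₁, p₂, q₂, p₃, q₃, hp₁, hq₁, hp₂, hq₂, hp₃, hq₃, ne₁, ne₂, ne₃,
    h₁₂, h₁₃, h₂₃, hx₁, hx₂, hx₃⟩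
  exact hS x (mem_ball_zero_iff.2 hx) _ ⟨p₁, hp₁, q₁, hq₁, ne₁, rfl⟩ _ ⟨p₂, hp₂, q₂, hq₂, ne₂, rfl⟩
    _ ⟨p₃, hp₃, q₃, hq₃, ne₃, rfl⟩ h₁₂ h₁₃ h₂₃ hx₁ hx₂ hx₃
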